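/- No historyless interaction system with self-independent reaction functions and more than one stable state is convergent: there exists a state a and a fair schedule σ such that the (a,σ)-trajectory does not converge. -/

import Mathlib

variable {n : ℕ} {A : Fin n → Type*}

/-- One step of historyless dynamics. -/
def step (f : ∀ i, (∀ j, A j) → A i) (s : Finset (Fin n)) (a : ∀ j, A j) : ∀ j, A j :=
  fun i => if i ∈ s then f i a else a i

/-- The `(a0, σ)`-trajectory of the historyless system. -/
def traj (f : ∀ i, (∀ j, A j) → A i) (σ : ℕ → Finset (Fin n)) (a0 : ∀ j, A j) :
    ℕ → ∀ j, A j
  | 0 => a0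
  | t + 1 => step f (σ (t + 1)) (traj f σ a0 t)

/-- A schedule is fair if it activates every node infinitely often. -/
def Fair (σ : ℕ → Finset (Fin n)) : Prop := ∀ i : Fin n, ∀ T : ℕ, ∃ t ≥ T, i ∈ σ t

/-- A sequence of states converges to `b` if it is eventually constantly `b`. -/
def Converges (x : ℕ → ∀ j, A j) (b : ∀ j, A j) : Prop := ∃ T : ℕ, ∀ t > T, x t = b

/-- A state `a` is committed to `b` if every fair trajectory from `a` converges to `b`. -/
def Committed (f : ∀ i, (∀ j, A j) → A i) (a b : ∀ j, A j) : Prop :=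
  ∀ σ : ℕ → Finset (Fin n), Fair σ → Converges (traj f σ a) b

/-- Self-independence: each `f i` ignores node `i`'s own action. -/
def SelfIndep (f : ∀ i, (∀ j, A j) → A i) : Prop :=
  ∀ (i : Fin n) (a a' : ∀ j, A j), (∀ j, j ≠ i → a j = a' j) → f i a = f i a' 

/-- A stable state is a fixed point of `f`. -/
def Stable (f : ∀ i, (∀ j, A j) → A i) (a : ∀ j, A j) : Prop := ∀ i, f i a = a i

/-- The system is convergent if every fair trajectory converges. -/
def Convergent (f : ∀ i, (∀ j, A j) → A i) : Prop :=
  ∀ (a : ∀ j, A j) (σ : ℕ → Finset (Fin n)), Fair σ → ∃ b, Converges (traj f σ a) b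

/-!
Suppose every fair trajectory converges. Its limit is then a stable state, so the set of
outcomes of a state `a` (limits of fair trajectories from `a`) is nonempty, and equals `{c}`
when `a = c` is stable. By self-independence, two states that differ only at node `i` become
equal once `i` alone is activated, so they share an outcome. Changing `b` into `b'` one
coordinate at a time therefore passes through a state with two outcomes (a bivalent state).

From a bivalent `x` and any node `i`, some finite run whose last step activates `i` ends in a
bivalent state: otherwise activating `i` after any run from `x` has one and the same outcome,
and since every outcome of `x` is stable, it would be the only outcome of `x`. Chaining such
runs over the nodes in round-robin order gives a fair schedule whose trajectory visits bivalent
states at arbitrarily late times, so it cannot settle at a stable state.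
-/

variable {f : ∀ i, (∀ j, A j) → A i}

def run (f : ∀ i, (∀ j, A j) → A i) (L : List (Finset (Fin n))) (a : ∀ j, A j) : ∀ j, A j :=
  L.foldl (fun x s => step f s x) a

theorem run_append (L₁ L₂ : List (Finset (Fin n))) (a : ∀ j, A j) :
    run f (L₁ ++ L₂) a = run f L₂ (run f L₁ a) :=
  List.foldl_append

theorem run_concat (L : List (Finset (Fin n))) (s : Finset (Fin n)) (a : ∀ j, A j) :
    run f (L ++ [s]) a = step f s (run f L a) := by
  rw [run_append]; rfl

theorem traj_eq_run (σ : ℕ → Finset (Fin n)) (a : ∀ j, A j) (t : ℕ) :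
    traj f σ a t = run f ((List.range t).map fun k => σ (k + 1)) a := by
  induction t with
  | zero => rfl
  | succ t ih => rw [List.range_succ, List.map_append, List.map_singleton, run_concat, ← ih]; rfl

theorem fair_const_univ : Fair fun _ => (Finset.univ : Finset (Fin n)) :=
  fun _ T => ⟨T, le_rfl, Finset.mem_univ _⟩

def consSchedule (s : Finset (Fin n)) (σ : ℕ → Finset (Fin n)) : ℕ → Finset (Fin n) :=
  fun t => if t = 1 then s else σ (t - 1)

theorem traj_consSchedule_succ (s : Finset (Fin n)) (σ : ℕ → Finset (Fin n))
    (a : ∀ j, A j) (t : ℕ) :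
    traj f (consSchedule s σ) a (t + 1) = traj f σ (step f s a) t := by
  induction t with
  | zero => rfl
  | succ t ih =>
    change step f (consSchedule s σ (t + 2)) _ = step f (σ (t + 1)) _
    rw [ih]
    simp [consSchedule]

theorem Fair.cons {σ : ℕ → Finset (Fin n)} (hσ : Fair σ) (s : Finset (Fin n)) :
    Fair (consSchedule s σ) := by
  intro i T
  obtain ⟨t, ht, hi⟩ := hσ i (T + 1)
  refine ⟨t + 1, by omega, ?_⟩
  simpa [consSchedule, show t ≠ 0 by omega] using hi

def outcomes (f : ∀ i, (∀ j, A j) → A i) (a : ∀ j, A j) : Set (∀ j, A j) :=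
  {c | ∃ σ, Fair σ ∧ Converges (traj f σ a) c}

theorem outcomes_step_subset (s : Finset (Fin n)) (a : ∀ j, A j) :
    outcomes f (step f s a) ⊆ outcomes f a := by
  rintro c ⟨σ, hσ, T, hT⟩
  refine ⟨consSchedule s σ, hσ.cons s, T + 1, fun t ht => ?_⟩
  obtain ⟨t, rfl⟩ : ∃ u, t = u + 1 := ⟨t - 1, by omega⟩
  rw [traj_consSchedule_succ]
  exact hT t (by omega)

theorem outcomes_nonempty (hconv : Convergent f) (a : ∀ j, A j) : (outcomes f a).Nonempty := by
  obtain ⟨c, hc⟩ := hconv a _ fair_const_univ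
  exact ⟨c, _, fair_const_univ, hc⟩

theorem Stable.step_eq {c : ∀ j, A j} (hc : Stable f c) (s : Finset (Fin n)) :
    step f s c = c := by
  funext i
  by_cases hi : i ∈ s <;> simp [step, hi, hc i]

theorem Stable.traj_eq {c : ∀ j, A j} (hc : Stable f c) (σ : ℕ → Finset (Fin n)) (t : ℕ) :
    traj f σ c t = c := by
  induction t with
  | zero => rfl
  | succ t ih => exact (congrArg (step f (σ (t + 1))) ih).trans (hc.step_eq _)

theorem Stable.outcomes_eq {c : ∀ j, A j} (hc : Stable f c) : outcomes f c = {c} := by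
  refine Set.eq_singleton_iff_unique_mem.mpr ⟨⟨_, fair_const_univ, 0, fun t _ => hc.traj_eq _ t⟩, ?_⟩
  rintro d ⟨σ, -, T, hT⟩
  rw [← hT (T + 1) (by omega), hc.traj_eq]

theorem stable_of_converges {σ : ℕ → Finset (Fin n)} {a c : ∀ j, A j} (hσ : Fair σ)
    (h : Converges (traj f σ a) c) : Stable f c := by
  obtain ⟨T, hT⟩ := h
  intro i
  obtain ⟨t, ht, hi⟩ := hσ i (T + 2)
  obtain ⟨t, rfl⟩ : ∃ u, t = u + 1 := ⟨t - 1, by omega⟩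
  have hstep : step f (σ (t + 1)) c = c := by
    have hnext : traj f σ a (t + 1) = c := hT (t + 1) (by omega)
    rwa [traj, hT t (by omega)] at hnext
  simpa [step, hi] using congrFun hstep i

theorem step_singleton_eq_of_forall_ne (hsi : SelfIndep f) {i : Fin n} {a a' : ∀ j, A j}
    (h : ∀ j, j ≠ i → a j = a' j) : step f {i} a = step f {i} a' := by
  funext j
  by_cases hj : j = i
  · subst hj
    simpa [step] using hsi j a a' h
  · simpa [step, hj] using h j hj

/-- Activating the one node where `a` and `a'` differ merges their futures. -/
theorem outcomes_inter_nonempty_of_forall_ne (hconv : Convergent f) (hsi : SelfIndep f)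
    {i : Fin n} {a a' : ∀ j, A j} (h : ∀ j, j ≠ i → a j = a' j) :
    (outcomes f a ∩ outcomes f a').Nonempty := by
  obtain ⟨d, hd⟩ := outcomes_nonempty hconv (step f {i} a)
  refine ⟨d, outcomes_step_subset _ _ hd, outcomes_step_subset {i} a' ?_⟩
  rwa [← step_singleton_eq_of_forall_ne hsi h]

theorem exists_nontrivial_outcomes (hconv : Convergent f) (hsi : SelfIndep f)
    {b b' : ∀ j, A j} (hb : Stable f b) (hb' : Stable f b') (hne : b ≠ b') :
    ∃ x, (outcomes f x).Nontrivial := by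
  by_contra! H
  let hybrid (k : ℕ) : ∀ j, A j := fun j => if (j : ℕ) < k then b' j else b j
  have hmem : ∀ k ≤ n, b ∈ outcomes f (hybrid k) := by
    intro k
    induction k with
    | zero =>
      intro _
      simp [hybrid, hb.outcomes_eq]
    | succ k ih =>
      intro hk
      have hagree : ∀ j, j ≠ ⟨k, by omega⟩ → hybrid k j = hybrid (k + 1) j := by
        intro j hj
        have : (j : ℕ) ≠ k := fun h => hj (Fin.ext h)
        simp only [hybrid, Nat.lt_succ_iff_lt_or_eq, this, or_false]
      obtain ⟨d, hd, hd'⟩ := outcomes_inter_nonempty_of_forall_ne hconv hsi hagree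
      rwa [H _ (ih (by omega)) hd]
  have hb'n : hybrid n = b' := funext fun j => by simp [hybrid]
  have := hmem n le_rfl
  rw [hb'n, hb'.outcomes_eq] at this
  exact hne this

section activation

variable {x : ∀ j, A j} {i : Fin n}
  (H : ∀ (L : List (Finset (Fin n))) (s : Finset (Fin n)), i ∈ s →
    (outcomes f (step f s (run f L x))).Subsingleton)
include H

theorem outcomes_step_insert_eq (hconv : Convergent f) (hsi : SelfIndep f)
    (L : List (Finset (Fin n))) {S : Finset (Fin n)} (hS : i ∈ S) (j : Fin n) :
    outcomes f (step f (insert j S) (run f L x)) = outcomes f (step f S (run f L x)) := by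
  have hagree : ∀ m, m ≠ j → step f (insert j S) (run f L x) m = step f S (run f L x) m := by
    intro m hm
    simp [step, hm]
  obtain ⟨d, hd, hd'⟩ := outcomes_inter_nonempty_of_forall_ne hconv hsi hagree
  rw [(H L _ (Finset.mem_insert_of_mem hS)).eq_singleton_of_mem hd,
    (H L S hS).eq_singleton_of_mem hd']

theorem outcomes_step_insert_self_eq (hconv : Convergent f) (hsi : SelfIndep f)
    (L : List (Finset (Fin n))) (r : Finset (Fin n)) :
    outcomes f (step f (insert i r) (run f L x)) = outcomes f (step f {i} (run f L x)) := by
  induction r using Finset.induction_on with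
  | empty => rfl
  | insert j r _ ih =>
    rw [Finset.insert_comm, outcomes_step_insert_eq H hconv hsi L (Finset.mem_insert_self i r), ih]

theorem outcomes_step_singleton_run (hconv : Convergent f) (hsi : SelfIndep f)
    (L : List (Finset (Fin n))) :
    outcomes f (step f {i} (run f L x)) = outcomes f (step f {i} x) := by
  induction L using List.reverseRecOn with
  | nil => rfl
  | append_singleton L r ih =>
    rw [← ih, ← outcomes_step_insert_self_eq H hconv hsi L r, run_concat]
    have hagree : ∀ m, m ≠ i → step f {i} (step f r (run f L x)) m
        = step f (insert i r) (run f L x) m := by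
      intro m hm
      simp [step, hm]
    obtain ⟨d, hd, hd'⟩ := outcomes_inter_nonempty_of_forall_ne hconv hsi hagree
    rw [← run_concat] at hd ⊢
    rw [(H _ _ (Finset.mem_singleton_self i)).eq_singleton_of_mem hd,
      (H L _ (Finset.mem_insert_self i r)).eq_singleton_of_mem hd']

/-- A fair trajectory from `x` ends in a stable state, which activating `i` does not change. -/
theorem outcomes_subset_outcomes_step_singleton (hconv : Convergent f) (hsi : SelfIndep f) :
    outcomes f x ⊆ outcomes f (step f {i} x) := by
  rintro e ⟨σ, hσ, T, hT⟩
  have he : Stable f e := stable_of_converges hσ ⟨T, hT⟩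
  rw [← outcomes_step_singleton_run H hconv hsi ((List.range (T + 1)).map fun k => σ (k + 1)),
    ← traj_eq_run, hT (T + 1) (by omega), he.step_eq, he.outcomes_eq]
  rfl

end activation

theorem exists_nontrivial_outcomes_run (hconv : Convergent f) (hsi : SelfIndep f)
    {x : ∀ j, A j} (hx : (outcomes f x).Nontrivial) (i : Fin n) :
    ∃ (L : List (Finset (Fin n))) (s : Finset (Fin n)),
      i ∈ s ∧ (outcomes f (run f (L ++ [s]) x)).Nontrivial := by
  by_contra! H
  simp only [run_concat] at H
  exact hx.not_subsingleton ((H [] {i} (Finset.mem_singleton_self i)).anti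
    (outcomes_subset_outcomes_step_singleton H hconv hsi))

section blocks

variable (f) (B : ℕ → (∀ j, A j) → List (Finset (Fin n))) (x₀ : ∀ j, A j)

def blockState : ℕ → ∀ j, A j
  | 0 => x₀
  | k + 1 => run f (B k (blockState k)) (blockState k)

def blockPrefix : ℕ → List (Finset (Fin n))
  | 0 => []
  | k + 1 => blockPrefix k ++ B k (blockState f B x₀ k)

/-- Round `t ≥ 1` activates entry `t - 1` of the concatenation of all blocks. -/
def blockSchedule (t : ℕ) : Finset (Fin n) :=
  (blockPrefix f B x₀ t).getD (t - 1) ∅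

variable {f B x₀}

theorem run_blockPrefix (k : ℕ) : run f (blockPrefix f B x₀ k) x₀ = blockState f B x₀ k := by
  induction k with
  | zero => rfl
  | succ k ih => rw [blockPrefix, run_append, ih]; rfl

theorem blockPrefix_isPrefix {k m : ℕ} (h : k ≤ m) :
    blockPrefix f B x₀ k <+: blockPrefix f B x₀ m := by
  induction m, h using Nat.le_induction with
  | base => exact List.prefix_refl _
  | succ m _ ih => exact ih.trans (List.prefix_append _ _)

variable (hB : ∀ k x, B k x ≠ [])
include hB

theorem le_length_blockPrefix (k : ℕ) : k ≤ (blockPrefix f B x₀ k).length := by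
  induction k with
  | zero => exact le_rfl
  | succ k ih =>
    rw [blockPrefix, List.length_append]
    have := List.length_pos_iff.mpr (hB k (blockState f B x₀ k))
    omega

theorem blockSchedule_succ {k t : ℕ} (ht : t < (blockPrefix f B x₀ k).length) :
    blockSchedule f B x₀ (t + 1) = (blockPrefix f B x₀ k)[t] := by
  have ht' : t < (blockPrefix f B x₀ (t + 1)).length :=
    Nat.lt_of_lt_of_le t.lt_succ_self (le_length_blockPrefix hB _)
  rw [blockSchedule, Nat.add_sub_cancel, List.getD_eq_getElem _ _ ht']
  rcases le_total (t + 1) k with h | h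
  · exact (blockPrefix_isPrefix h).getElem ht'
  · exact ((blockPrefix_isPrefix h).getElem ht).symm

theorem traj_blockSchedule (k : ℕ) :
    traj f (blockSchedule f B x₀) x₀ (blockPrefix f B x₀ k).length = blockState f B x₀ k := by
  rw [traj_eq_run, ← run_blockPrefix k]
  congr 1
  refine List.ext_getElem (by simp) fun t ht _ => ?_
  simp only [List.getElem_map, List.getElem_range]
  exact blockSchedule_succ hB (by simpa using ht)

theorem exists_blockSchedule_eq_of_mem {k : ℕ} {s : Finset (Fin n)}
    (hs : s ∈ B k (blockState f B x₀ k)) :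
    ∃ t > (blockPrefix f B x₀ k).length, blockSchedule f B x₀ t = s := by
  obtain ⟨m, hm, rfl⟩ := List.getElem_of_mem hs
  have hlt : (blockPrefix f B x₀ k).length + m < (blockPrefix f B x₀ (k + 1)).length := by
    simp [blockPrefix, hm]
  refine ⟨(blockPrefix f B x₀ k).length + m + 1, by omega, ?_⟩
  rw [blockSchedule_succ hB hlt]
  simp [blockPrefix, List.getElem_append_right]

end blocks

theorem exists_fair_frequently_mem (hn : 0 < n) {P : Set (∀ j, A j)} {x₀ : ∀ j, A j}
    (hx₀ : x₀ ∈ P)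
    (hext : ∀ x ∈ P, ∀ i, ∃ (L : List (Finset (Fin n))) (s : Finset (Fin n)),
      i ∈ s ∧ run f (L ++ [s]) x ∈ P) :
    ∃ σ, Fair σ ∧ ∃ᶠ t in Filter.atTop, traj f σ x₀ t ∈ P := by
  choose! L s hLs using hext
  let node (k : ℕ) : Fin n := ⟨k % n, Nat.mod_lt k hn⟩
  let B (k : ℕ) (x : ∀ j, A j) := L x (node k) ++ [s x (node k)]
  have hB : ∀ k x, B k x ≠ [] := by simp [B]
  have hP : ∀ k, blockState f B x₀ k ∈ P := by
    intro k
    induction k with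
    | zero => exact hx₀
    | succ k ih => exact (hLs _ ih _).2
  refine ⟨blockSchedule f B x₀, fun i T => ?_, Filter.frequently_atTop.mpr fun T => ?_⟩
  · have hnode : node (i + n * T) = i := Fin.ext (by simp [node, Nat.mod_eq_of_lt i.isLt])
    set k := i + n * T
    have hmem : s (blockState f B x₀ k) (node k) ∈ B k (blockState f B x₀ k) := by
      simp [B]
    obtain ⟨t, ht, hst⟩ := exists_blockSchedule_eq_of_mem hB hmem
    have := le_length_blockPrefix hB (f := f) (x₀ := x₀) k
    have := Nat.le_mul_of_pos_left T hn
    refine ⟨t, by omega, ?_⟩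
    rw [hst, ← hnode]
    exact (hLs _ (hP _) _).1
  · exact ⟨_, le_length_blockPrefix hB T, by rw [traj_blockSchedule hB]; exact hP T⟩

theorem not_frequently_nontrivial_outcomes {σ : ℕ → Finset (Fin n)} {a c : ∀ j, A j}
    (hσ : Fair σ) (hc : Converges (traj f σ a) c) :
    ¬ ∃ᶠ t in Filter.atTop, (outcomes f (traj f σ a t)).Nontrivial := by
  intro hfreq
  obtain ⟨T, hT⟩ := hc
  obtain ⟨t, ht, hnt⟩ := Filter.frequently_atTop.mp hfreq (T + 1)
  rw [hT t (by omega), (stable_of_converges hσ ⟨T, hT⟩).outcomes_eq] at hnt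
  exact Set.not_nontrivial_singleton hnt

theorem stmt3_general (n : ℕ) (A : Fin n → Type*)
    (f : ∀ i, (∀ j, A j) → A i) (hsi : SelfIndep f)
    (b b' : ∀ j, A j) (hb : Stable f b) (hb' : Stable f b') (hne : b ≠ b') :
    ∃ (a : ∀ j, A j) (σ : ℕ → Finset (Fin n)),
      Fair σ ∧ ∀ c : ∀ j, A j, ¬ Converges (traj f σ a) c := by
  by_contra! hconv
  change Convergent f at hconv
  have hn : 0 < n := Nat.pos_of_ne_zero fun h => hne (funext fun j => (h ▸ j).elim0)
  obtain ⟨x₀, hx₀⟩ := exists_nontrivial_outcomes hconv hsi hb hb' hne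
  obtain ⟨σ, hσ, hfreq⟩ := exists_fair_frequently_mem hn (P := {x | (outcomes f x).Nontrivial})
    hx₀ fun x hx i => exists_nontrivial_outcomes_run hconv hsi hx i
  obtain ⟨c, hc⟩ := hconv x₀ σ hσ
  exact not_frequently_nontrivial_outcomes hσ hc hfreq

/-- No historyless interaction system with self-independent reaction functions and
more than one stable state is convergent: there exist a state `a` and a fair
schedule `σ` such that the `(a,σ)`-trajectory does not converge. -/
theorem stmt3 (n : ℕ) (A : Fin n → Type*) [∀ i, Fintype (A i)] [∀ i, Nonempty (A i)]
    (f : ∀ i, (∀ j, A j) → A i) (hsi : SelfIndep f)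
    (b b' : ∀ j, A j) (hb : Stable f b) (hb' : Stable f b') (hne : b ≠ b') :
    ∃ (a : ∀ j, A j) (σ : ℕ → Finset (Fin n)),
      Fair σ ∧ ∀ c : ∀ j, A j, ¬ Converges (traj f σ a) c :=
  stmt3_general n A f hsi b b' hb hb' hne
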